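/- ∑_{n≥0} (-1)^n/(2n+1)^3 = ∑_{j≥0} (1/2^{j+1}) · ( ∏_{i=1}^{j} (2i)/(2i+1) ) · ( 1 + H_j^{(1)} + (1/2)·( (H_j^{(1)})^2 + H_j^{(2)} ) ), where H_j^{(r)} = ∑_{k=1}^{j} 1/(2k+1)^r, both series converge, and the empty product and sums (j = 0) equal 1 and 0 respectively. -/

import Mathlib

/-!
Euler's series transformation: since `∑_{j ≥ n} C(j,n) / 2^(j+1) = 1`, summing the absolutely
convergent double series `∑ₙ ∑ⱼ aₙ C(j,n) / 2^(j+1)` by rows gives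
`∑ aₙ = ∑ⱼ 2^(-(j+1)) ∑_{n ≤ j} C(j,n) aₙ`. For `aₙ = (-1)ⁿ / (2n+1)³` the inner sum is `(-1)^j`
times the `j`-th forward difference, with step `2`, of `1 / y³` at `1`, and
`Δ_h^j (1 / y³) (x) = (-h)^j j! / ∏_{i ≤ j} (x + ih) · (S₁² + S₂) / 2` with
`S_p = ∑_{i ≤ j} (x + ih)^(-p)`: half the second `x`-derivative of the classical
`Δ_h^j (1 / y) (x) = (-h)^j j! / ∏_{i ≤ j} (x + ih)`.
-/

open Finset fwdDiff Nat

section Shift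

variable {R : Type*} [CommSemiring R] (x h : R) (n : ℕ)

lemma prod_range_succ_eq_mul_prod_shift {M : Type*} [CommMonoid M] (g : R → M) :
    ∏ i ∈ range (n + 1), g (x + i * h) = g x * ∏ i ∈ range n, g (x + h + i * h) := by
  rw [prod_range_succ', mul_comm]
  congr 1
  · simp
  · exact prod_congr rfl fun i _ => by push_cast; ring_nf

lemma sum_range_succ_eq_add_sum_shift {M : Type*} [AddCommMonoid M] (g : R → M) :
    ∑ i ∈ range (n + 1), g (x + i * h) = g x + ∑ i ∈ range n, g (x + h + i * h) := by
  rw [sum_range_succ', add_comm]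
  congr 1
  · simp
  · exact sum_congr rfl fun i _ => by push_cast; ring_nf

end Shift

lemma sum_range_succ_eq_add_sum_Icc {M : Type*} [AddCommMonoid M] (g : ℕ → M) (j : ℕ) :
    ∑ i ∈ range (j + 1), g i = g 0 + ∑ i ∈ Icc 1 j, g i := by
  rw [Nat.range_succ_eq_Icc_zero, ← insert_Icc_add_one_left_eq_Icc (Nat.zero_le j),
    sum_insert (by simp), zero_add]

lemma hasSum_choose_div_two_pow (n : ℕ) :
    HasSum (fun j : ℕ => (j.choose n : ℝ) / 2 ^ (j + 1)) 1 := by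
  have hgeom := (hasSum_choose_mul_geometric_of_norm_lt_one (𝕜 := ℝ) n
    (r := 1 / 2) (by norm_num)).div_const (2 ^ (n + 1))
  have hterm : (fun m : ℕ => ((m + n).choose n : ℝ) * (1 / 2) ^ m / 2 ^ (n + 1)) =
      fun m => ((m + n).choose n : ℝ) / 2 ^ (m + n + 1) := by
    funext m
    rw [add_assoc, pow_add, one_div_pow]
    field_simp
    ring
  have hsum : (1 : ℝ) / (1 - 1 / 2) ^ (n + 1) / 2 ^ (n + 1) =
      1 - ∑ i ∈ range n, (i.choose n : ℝ) / 2 ^ (i + 1) := by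
    rw [sum_eq_zero fun i hi => by rw [Nat.choose_eq_zero_of_lt (mem_range.1 hi)]; simp]
    norm_num [one_div_pow]
  rw [hterm, hsum] at hgeom
  exact (hasSum_nat_add_iff' n).1 hgeom

theorem hasSum_euler_transform {a : ℕ → ℝ} (ha : Summable a) :
    HasSum (fun j => (∑ n ∈ range (j + 1), (j.choose n : ℝ) * a n) / 2 ^ (j + 1))
      (∑' n, a n) := by
  set F : ℕ × ℕ → ℝ := fun p => a p.1 * ((p.2.choose p.1 : ℝ) / 2 ^ (p.2 + 1))
  have hcol (n : ℕ) : HasSum (fun j => F (n, j)) (a n) := by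
    simpa using (hasSum_choose_div_two_pow n).mul_left (a n)
  have hcol_abs (n : ℕ) : HasSum (fun j => |F (n, j)|) |a n| := by
    simpa [F, abs_mul, abs_div] using (hasSum_choose_div_two_pow n).mul_left |a n|
  have hF : Summable F := by
    refine summable_abs_iff.1 <| (summable_prod_of_nonneg fun _ => abs_nonneg _).2
      ⟨fun n => (hcol_abs n).summable, ?_⟩
    simpa only [fun n => (hcol_abs n).tsum_eq] using ha.abs
  have hFa : HasSum F (∑' n, a n) := by
    rw [(hF.hasSum.prod_fiberwise hcol).tsum_eq]
    exact hF.hasSum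
  refine ((Equiv.prodComm ℕ ℕ).hasSum_iff.2 hFa).prod_fiberwise fun j => ?_
  have hrow : (∑ n ∈ range (j + 1), (j.choose n : ℝ) * a n) / 2 ^ (j + 1) =
      ∑ n ∈ range (j + 1), F (n, j) := by
    rw [sum_div]
    exact sum_congr rfl fun n _ => by simp only [F]; ring
  rw [hrow]
  exact hasSum_sum_of_ne_finset_zero fun n hn => by
    simp [F, Nat.choose_eq_zero_of_lt (by simpa using hn : j < n)]

theorem fwdDiff_iter_one_div_pow_three {h : ℝ} (hh : 0 < h) (j : ℕ) {x : ℝ} (hx : 0 < x) :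
    (Δ_[h])^[j] (fun y : ℝ => 1 / y ^ 3) x =
      (-h) ^ j * j ! / (∏ i ∈ range (j + 1), (x + i * h)) *
        ((∑ i ∈ range (j + 1), 1 / (x + i * h)) ^ 2 +
          ∑ i ∈ range (j + 1), 1 / (x + i * h) ^ 2) / 2 := by
  induction j generalizing x with
  | zero =>
    simp only [Function.iterate_zero_apply, zero_add, range_one, prod_singleton, sum_singleton,
      CharP.cast_eq_zero, zero_mul, add_zero, pow_zero, factorial_zero, cast_one]
    field_simp
    ring
  | succ j ih =>
    rw [Function.iterate_succ_apply', fwdDiff, ih (by positivity), ih hx]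
    have hP : ∏ i ∈ range (j + 1), (x + h + i * h) =
        (∏ i ∈ range (j + 1), (x + i * h)) * (x + (j + 1 : ℕ) * h) / x := by
      have e := prod_range_succ_eq_mul_prod_shift x h (j + 1) (fun y => y)
      rw [prod_range_succ] at e
      rw [eq_div_iff hx.ne', e, mul_comm]
    have hS₁ : ∑ i ∈ range (j + 1), 1 / (x + h + i * h) =
        ∑ i ∈ range (j + 1), 1 / (x + i * h) + 1 / (x + (j + 1 : ℕ) * h) - 1 / x := by
      have e := sum_range_succ_eq_add_sum_shift x h (j + 1) (fun y => 1 / y)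
      rw [sum_range_succ] at e
      linarith
    have hS₂ : ∑ i ∈ range (j + 1), 1 / (x + h + i * h) ^ 2 =
        ∑ i ∈ range (j + 1), 1 / (x + i * h) ^ 2 + 1 / (x + (j + 1 : ℕ) * h) ^ 2 - 1 / x ^ 2 := by
      have e := sum_range_succ_eq_add_sum_shift x h (j + 1) (fun y => 1 / y ^ 2)
      rw [sum_range_succ] at e
      linarith
    rw [hP, hS₁, hS₂, prod_range_succ _ (j + 1), sum_range_succ _ (j + 1),
      sum_range_succ _ (j + 1)]
    push_cast [factorial_succ]
    field_simp
    ring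

lemma sum_range_choose_mul_alternating_div_odd_cube (j : ℕ) :
    ∑ n ∈ range (j + 1), (j.choose n : ℝ) * ((-1) ^ n / (2 * n + 1) ^ 3) =
      (-1) ^ j * (Δ_[(2 : ℝ)])^[j] (fun y : ℝ => 1 / y ^ 3) 1 := by
  rw [fwdDiff_iter_eq_sum_shift, mul_sum]
  refine sum_congr rfl fun n hn => ?_
  have hsign : (-1 : ℝ) ^ j = (-1) ^ n * (-1) ^ (j - n) := by
    rw [← pow_add, Nat.add_sub_cancel' (mem_range_succ_iff.1 hn)]
  have hsq : (-1 : ℝ) ^ (j - n) * (-1) ^ (j - n) = 1 := by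
    rw [← mul_pow]; norm_num
  rw [zsmul_eq_mul, nsmul_eq_mul, hsign]
  push_cast
  linear_combination (-(j.choose n : ℝ) * (-1) ^ n / (2 * n + 1) ^ 3) * hsq

lemma prod_Icc_two_mul_div_two_mul_add_one (j : ℕ) :
    ∏ i ∈ Icc 1 j, (2 * i : ℝ) / (2 * i + 1) =
      2 ^ j * j ! / ∏ i ∈ range (j + 1), (1 + i * 2 : ℝ) := by
  induction j with
  | zero => simp
  | succ j ih =>
    rw [prod_Icc_succ_top (by omega), ih, prod_range_succ _ (j + 1), factorial_succ,
      div_mul_div_comm (2 ^ j * (j ! : ℝ))]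
    congr 1 <;> push_cast <;> ring

lemma euler_transform_term_dirichlet_beta_three (j : ℕ) :
    (∑ n ∈ range (j + 1), (j.choose n : ℝ) * ((-1) ^ n / (2 * n + 1) ^ 3)) / 2 ^ (j + 1) =
      (1 / 2 ^ (j + 1)) * (∏ i ∈ Icc 1 j, (2 * i : ℝ) / (2 * i + 1)) *
        (1 + (∑ k ∈ Icc 1 j, (1 : ℝ) / (2 * k + 1)) +
          (1 / 2) * ((∑ k ∈ Icc 1 j, (1 : ℝ) / (2 * k + 1)) ^ 2 +
            ∑ k ∈ Icc 1 j, (1 : ℝ) / (2 * k + 1) ^ 2)) := by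
  rw [sum_range_choose_mul_alternating_div_odd_cube,
    fwdDiff_iter_one_div_pow_three two_pos j one_pos, prod_Icc_two_mul_div_two_mul_add_one,
    sum_range_succ_eq_add_sum_Icc, sum_range_succ_eq_add_sum_Icc (fun i => 1 / (1 + i * 2 : ℝ) ^ 2)]
  simp_rw [show ∀ i : ℕ, (1 + i * 2 : ℝ) = 2 * i + 1 from fun i => by ring]
  simp only [CharP.cast_eq_zero, mul_zero, zero_add, div_one, one_pow]
  have hsign : (-1 : ℝ) ^ j * (-2) ^ j = 2 ^ j := by rw [← mul_pow]; norm_num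
  set Q := ∏ i ∈ range (j + 1), (2 * i + 1 : ℝ)
  set u := ∑ k ∈ Icc 1 j, (1 : ℝ) / (2 * k + 1)
  set v := ∑ k ∈ Icc 1 j, (1 : ℝ) / (2 * k + 1) ^ 2
  linear_combination (j ! / Q * ((1 + u) ^ 2 + (1 + v)) / 2 / 2 ^ (j + 1)) * hsign

lemma summable_one_div_two_mul_add_one_pow {p : ℕ} (hp : 1 < p) :
    Summable (fun n : ℕ => 1 / (2 * n + 1 : ℝ) ^ p) := by
  have := (Real.summable_one_div_nat_pow.2 hp).comp_injective
    (i := fun n => 2 * n + 1) fun a b h => by simp at h; omega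
  simpa [Function.comp_def] using this

/-- New series for the Dirichlet beta function value `β(3)`. -/
theorem stmt_8 :
    Summable (fun n : ℕ => (-1 : ℝ) ^ n / (2 * n + 1) ^ 3) ∧
    Summable (fun j : ℕ =>
      (1 / 2 ^ (j + 1)) * (∏ i ∈ Finset.Icc 1 j, (2 * i : ℝ) / (2 * i + 1)) *
        (1 + (∑ k ∈ Finset.Icc 1 j, (1 : ℝ) / (2 * k + 1)) +
          (1 / 2) * ((∑ k ∈ Finset.Icc 1 j, (1 : ℝ) / (2 * k + 1)) ^ 2 +
            ∑ k ∈ Finset.Icc 1 j, (1 : ℝ) / (2 * k + 1) ^ 2))) ∧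
    (∑' n : ℕ, (-1 : ℝ) ^ n / (2 * n + 1) ^ 3) =
      ∑' j : ℕ,
        (1 / 2 ^ (j + 1)) * (∏ i ∈ Finset.Icc 1 j, (2 * i : ℝ) / (2 * i + 1)) *
          (1 + (∑ k ∈ Finset.Icc 1 j, (1 : ℝ) / (2 * k + 1)) +
            (1 / 2) * ((∑ k ∈ Finset.Icc 1 j, (1 : ℝ) / (2 * k + 1)) ^ 2 +
              ∑ k ∈ Finset.Icc 1 j, (1 : ℝ) / (2 * k + 1) ^ 2)) := by
  have hβ : Summable (fun n : ℕ => (-1 : ℝ) ^ n / (2 * n + 1) ^ 3) :=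
    (summable_one_div_two_mul_add_one_pow (by norm_num : 1 < 3)).of_norm_bounded fun n => by
      rw [norm_div, norm_pow, norm_neg, norm_one, one_pow, Real.norm_of_nonneg (by positivity)]
  have h := hasSum_euler_transform hβ
  simp only [euler_transform_term_dirichlet_beta_three] at h
  exact ⟨hβ, h.summable, h.tsum_eq.symm⟩
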